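/- Let α, β > -1 with min(α,β) < -1/2. Then the modified moments M_m(α,β) = ∫_{-1}^{1}(1-x)^α(1+x)^β T_m(x)dx satisfy M_m(α,β) = O(m^{-2-2min(α,β)}) as m → ∞; i.e., there exists a constant C such that |M_m(α,β)| ≤ C·m^{-2-2min(α,β)} for all m ≥ 1. -/

import Mathlib

/-!
Write `μ = min α β`. The polynomial `S_m = T_{m+1}/(2(m+1)) - T_{m-1}/(2(m-1))` is an
antiderivative of `T_m`, and `T_n(cos θ) = cos nθ` gives `|S_m(x)| ≤ 3(m⁻² + m⁻¹√(1-x))`.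
Splitting `[-1,1]` at `0`, the reflection `x ↦ -x` turns the left half into a right half with
`α` and `β` exchanged, so it suffices to bound `∫_0^1 (1-x)^α (1+x)^β T_m`. Put `ε = m⁻²` and cut
at `1 - ε`. Near `1` the weight is `O((1-x)^μ)` with `μ > -1`, so the last piece is
`O(ε^(μ+1))`. On `[0, 1-ε]` integrate by parts against `S_m`: the weight's derivative is
`O((1-x)^(μ-1))`, and the bound on `S_m` makes the remaining integral and the boundary term at
`1 - ε` both `O(ε^(μ+1))`. The boundary term at `0` is only `O(√ε)`, which is still
`O(ε^(μ+1))` because `μ < -1/2`.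
-/

/-- The modified moment `M_m(α,β) = ∫_{-1}^1 (1-x)^α (1+x)^β T_m(x) dx`. -/
noncomputable def modMoment (α β : ℝ) (m : ℕ) : ℝ :=
  ∫ x in (-1:ℝ)..1, (1 - x) ^ α * (1 + x) ^ β * (Polynomial.Chebyshev.T ℝ m).eval x

open Polynomial Polynomial.Chebyshev Real Set MeasureTheory intervalIntegral

theorem integral_one_sub_rpow_of_neg_one_lt {p c : ℝ} (hp : -1 < p) :
    ∫ x in c..1, (1 - x) ^ p = (1 - c) ^ (p + 1) / (p + 1) := by
  rw [integral_comp_sub_left (fun x => x ^ p), sub_self, integral_rpow (Or.inl hp),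
    zero_rpow (by linarith), sub_zero]

theorem integral_one_sub_rpow_le {p a c : ℝ} (hp : p < -1) (ha : a < 1) (hc : c < 1) :
    ∫ x in a..c, (1 - x) ^ p ≤ (1 - c) ^ (p + 1) / -(p + 1) := by
  have h0 : (0 : ℝ) ∉ uIcc (1 - c) (1 - a) := by
    rw [mem_uIcc]; intro h; rcases h with h | h <;> linarith [h.1]
  rw [integral_comp_sub_left (fun x => x ^ p), integral_rpow (Or.inr ⟨hp.ne, h0⟩),
    div_neg, ← neg_div]
  refine div_le_div_of_nonpos_of_le (by linarith) ?_
  linarith [rpow_nonneg (sub_nonneg.2 ha.le) (p + 1)]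

theorem intervalIntegrable_one_sub_rpow_of_lt_one {p a c : ℝ} (ha : a < 1) (hc : c < 1) :
    IntervalIntegrable (fun x => (1 - x) ^ p) volume a c := by
  refine ContinuousOn.intervalIntegrable fun x hx => ?_
  have : x < 1 := by rcases mem_uIcc.1 hx with h | h <;> linarith [h.2]
  exact ((continuousAt_const.sub continuousAt_id).rpow_const
    (Or.inl (sub_ne_zero.2 this.ne'))).continuousWithinAt

section PowerSingularity

variable {φ : ℝ → ℝ} {μ B c : ℝ}

theorem intervalIntegrable_one_sub_rpow_of_neg_one_lt (hμ : -1 < μ) :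
    IntervalIntegrable (fun x => (1 - x) ^ μ) volume c 1 := by
  simpa using ((intervalIntegrable_rpow' (a := 0) (b := 1 - c) hμ).comp_sub_left 1).symm

theorem ae_restrict_Ioc_of_forall_Ioo {P : ℝ → Prop} {a b : ℝ} (h : ∀ x ∈ Ioo a b, P x) :
    ∀ᵐ x ∂volume.restrict (Ioc a b), P x := by
  rw [← Measure.restrict_congr_set Ioo_ae_eq_Ioc]
  exact ae_restrict_of_forall_mem measurableSet_Ioo h

theorem intervalIntegrable_of_abs_le_one_sub_rpow (hμ : -1 < μ) (hc : c ≤ 1)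
    (hφ : ContinuousOn φ (Ioo c 1)) (hle : ∀ x ∈ Ioo c 1, |φ x| ≤ B * (1 - x) ^ μ) :
    IntervalIntegrable φ volume c 1 := by
  refine ((intervalIntegrable_one_sub_rpow_of_neg_one_lt hμ).const_mul B).mono_fun' ?_ ?_ <;>
    rw [uIoc_of_le hc]
  · rw [← Measure.restrict_congr_set Ioo_ae_eq_Ioc]
    exact hφ.aestronglyMeasurable measurableSet_Ioo
  · exact ae_restrict_Ioc_of_forall_Ioo hle

theorem abs_integral_le_of_abs_le_one_sub_rpow (hμ : -1 < μ) (hc : c ≤ 1)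
    (hle : ∀ x ∈ Ioo c 1, |φ x| ≤ B * (1 - x) ^ μ) :
    |∫ x in c..1, φ x| ≤ B * ((1 - c) ^ (μ + 1) / (μ + 1)) := by
  calc |∫ x in c..1, φ x| ≤ ∫ x in c..1, B * (1 - x) ^ μ :=
        norm_integral_le_of_norm_le (f := φ) hc
          ((ae_restrict_iff' measurableSet_Ioc).1 (ae_restrict_Ioc_of_forall_Ioo hle))
          ((intervalIntegrable_one_sub_rpow_of_neg_one_lt hμ).const_mul B)
    _ = _ := by rw [intervalIntegral.integral_const_mul, integral_one_sub_rpow_of_neg_one_lt hμ]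

end PowerSingularity

section EndpointEstimate

variable {f f' v φ : ℝ → ℝ} {μ B K ε : ℝ}

theorem integral_one_sub_rpow_majorant_le (hμ : μ < -(1 / 2)) (hε₀ : 0 < ε) :
    ∫ x in 0..1 - ε, (ε * (1 - x) ^ (μ - 1) + √ε * (1 - x) ^ (μ - 1 / 2)) ≤
      (1 / -μ + 1 / -(μ + 1 / 2)) * ε ^ (μ + 1) := by
  have hb : 1 - ε < 1 := by linarith
  have hI₁ := integral_one_sub_rpow_le (p := μ - 1) (by linarith) zero_lt_one hb
  have hI₂ := integral_one_sub_rpow_le (p := μ - 1 / 2) (by linarith) zero_lt_one hb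
  rw [sub_sub_cancel, sub_add_cancel] at hI₁
  rw [sub_sub_cancel, show μ - 1 / 2 + 1 = μ + 1 / 2 by ring] at hI₂
  have hε₁ : ε * ε ^ μ = ε ^ (μ + 1) := by rw [rpow_add_one hε₀.ne', mul_comm]
  have hε₂ : √ε * ε ^ (μ + 1 / 2) = ε ^ (μ + 1) := by
    rw [sqrt_eq_rpow, ← rpow_add hε₀]; ring_nf
  rw [integral_add ((intervalIntegrable_one_sub_rpow_of_lt_one zero_lt_one hb).const_mul _)
    ((intervalIntegrable_one_sub_rpow_of_lt_one zero_lt_one hb).const_mul _),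
    intervalIntegral.integral_const_mul, intervalIntegral.integral_const_mul]
  calc ε * (∫ x in 0..1 - ε, (1 - x) ^ (μ - 1)) + √ε * ∫ x in 0..1 - ε, (1 - x) ^ (μ - 1 / 2)
      ≤ ε * (ε ^ μ / -μ) + √ε * (ε ^ (μ + 1 / 2) / -(μ + 1 / 2)) :=
        add_le_add (mul_le_mul_of_nonneg_left hI₁ hε₀.le)
          (mul_le_mul_of_nonneg_left hI₂ (sqrt_nonneg _))
    _ = 1 / -μ * (ε * ε ^ μ) + 1 / -(μ + 1 / 2) * (√ε * ε ^ (μ + 1 / 2)) := by ring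
    _ = (1 / -μ + 1 / -(μ + 1 / 2)) * ε ^ (μ + 1) := by rw [hε₁, hε₂]; ring

theorem abs_integral_deriv_mul_le (hμ : μ < -(1 / 2)) (hε₀ : 0 < ε) (hε₁ : ε ≤ 1)
    (hf'_le : ∀ x ∈ Ico 0 1, |f' x| ≤ B * (1 - x) ^ (μ - 1))
    (hv_le : ∀ x ∈ Icc 0 1, |v x| ≤ K * (ε + √ε * √(1 - x))) :
    |∫ x in 0..1 - ε, f' x * v x| ≤ B * K * (1 / -μ + 1 / -(μ + 1 / 2)) * ε ^ (μ + 1) := by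
  have hB : 0 ≤ B := by simpa using (abs_nonneg _).trans (hf'_le 0 ⟨le_rfl, one_pos⟩)
  have hK : 0 ≤ K := by
    have := (abs_nonneg _).trans (hv_le 1 ⟨zero_le_one, le_rfl⟩)
    simp only [sub_self, Real.sqrt_zero, mul_zero, add_zero] at this
    exact nonneg_of_mul_nonneg_left this hε₀
  have hb : 1 - ε < 1 := by linarith
  have hpt : ∀ x ∈ Ioc 0 (1 - ε), ‖f' x * v x‖ ≤
      B * K * (ε * (1 - x) ^ (μ - 1) + √ε * (1 - x) ^ (μ - 1 / 2)) := by
    intro x hx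
    have hx₁ : 0 < 1 - x := by linarith [hx.2]
    have hsqrt : (1 - x) ^ (μ - 1) * √(1 - x) = (1 - x) ^ (μ - 1 / 2) := by
      rw [sqrt_eq_rpow, ← rpow_add hx₁]; ring_nf
    rw [Real.norm_eq_abs, abs_mul]
    calc |f' x| * |v x| ≤ B * (1 - x) ^ (μ - 1) * (K * (ε + √ε * √(1 - x))) :=
          mul_le_mul (hf'_le x ⟨hx.1.le, by linarith⟩) (hv_le x ⟨hx.1.le, by linarith⟩)
            (abs_nonneg _) (by positivity)
      _ = _ := by rw [← hsqrt]; ring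
  calc |∫ x in 0..1 - ε, f' x * v x|
      ≤ ∫ x in 0..1 - ε, B * K * (ε * (1 - x) ^ (μ - 1) + √ε * (1 - x) ^ (μ - 1 / 2)) :=
        norm_integral_le_of_norm_le (by linarith) (ae_of_all _ hpt)
          ((((intervalIntegrable_one_sub_rpow_of_lt_one zero_lt_one hb).const_mul _).add
            ((intervalIntegrable_one_sub_rpow_of_lt_one zero_lt_one hb).const_mul _)).const_mul _)
    _ ≤ B * K * ((1 / -μ + 1 / -(μ + 1 / 2)) * ε ^ (μ + 1)) := by
        rw [intervalIntegral.integral_const_mul]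
        exact mul_le_mul_of_nonneg_left (integral_one_sub_rpow_majorant_le hμ hε₀)
          (mul_nonneg hB hK)
    _ = _ := by ring

theorem abs_boundary_term_le (hμ : μ < -(1 / 2)) (hε₀ : 0 < ε) (hε₁ : ε ≤ 1)
    (hf_le : ∀ x ∈ Ico 0 1, |f x| ≤ B * (1 - x) ^ μ)
    (hv_le : ∀ x ∈ Icc 0 1, |v x| ≤ K * (ε + √ε * √(1 - x))) :
    |f (1 - ε) * v (1 - ε) - f 0 * v 0| ≤ 4 * B * K * ε ^ (μ + 1) := by
  have hK : 0 ≤ K := by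
    have := (abs_nonneg _).trans (hv_le 1 ⟨zero_le_one, le_rfl⟩)
    simp only [sub_self, Real.sqrt_zero, mul_zero, add_zero] at this
    exact nonneg_of_mul_nonneg_left this hε₀
  have hf₁ := hf_le (1 - ε) ⟨by linarith, by linarith⟩
  have hv₁ := hv_le (1 - ε) ⟨by linarith, by linarith⟩
  have hf₀ := hf_le 0 ⟨le_rfl, one_pos⟩
  have hv₀ := hv_le 0 ⟨le_rfl, zero_le_one⟩
  rw [sub_sub_cancel] at hf₁ hv₁
  simp only [sub_zero, one_rpow, mul_one, Real.sqrt_one] at hf₀ hv₀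
  have hB : 0 ≤ B := (abs_nonneg _).trans hf₀
  have h_end : |f (1 - ε) * v (1 - ε)| ≤ 2 * B * K * ε ^ (μ + 1) := by
    rw [abs_mul]
    calc |f (1 - ε)| * |v (1 - ε)| ≤ B * ε ^ μ * (K * (ε + √ε * √ε)) :=
          mul_le_mul hf₁ hv₁ (abs_nonneg _) ((abs_nonneg _).trans hf₁)
      _ = 2 * B * K * ε ^ (μ + 1) := by
          rw [mul_self_sqrt hε₀.le, rpow_add_one hε₀.ne']; ring
  have h_zero : |f 0 * v 0| ≤ 2 * B * K * ε ^ (μ + 1) := by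
    have hε_le : ε ≤ ε ^ (μ + 1) := by
      simpa using rpow_le_rpow_of_exponent_ge hε₀ hε₁ (by linarith : μ + 1 ≤ 1)
    have hsqrt_le : √ε ≤ ε ^ (μ + 1) := by
      rw [sqrt_eq_rpow]; exact rpow_le_rpow_of_exponent_ge hε₀ hε₁ (by linarith)
    rw [abs_mul]
    calc |f 0| * |v 0| ≤ B * (K * (ε + √ε)) := mul_le_mul hf₀ hv₀ (abs_nonneg _) hB
      _ ≤ B * (K * (ε ^ (μ + 1) + ε ^ (μ + 1))) := by gcongr
      _ = 2 * B * K * ε ^ (μ + 1) := by ring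
  linarith [abs_sub (f (1 - ε) * v (1 - ε)) (f 0 * v 0)]

theorem abs_integral_zero_one_sub_mul_le (hμ : μ < -(1 / 2)) (hε₀ : 0 < ε) (hε₁ : ε ≤ 1)
    (hf : ∀ x ∈ Ico 0 1, HasDerivAt f (f' x) x) (hf' : ContinuousOn f' (Ico 0 1))
    (hf_le : ∀ x ∈ Ico 0 1, |f x| ≤ B * (1 - x) ^ μ)
    (hf'_le : ∀ x ∈ Ico 0 1, |f' x| ≤ B * (1 - x) ^ (μ - 1))
    (hv : ∀ x ∈ Icc 0 1, HasDerivAt v (φ x) x) (hφ : ContinuousOn φ (Icc 0 1))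
    (hv_le : ∀ x ∈ Icc 0 1, |v x| ≤ K * (ε + √ε * √(1 - x))) :
    |∫ x in 0..1 - ε, f x * φ x| ≤ B * K * (4 + 1 / -μ + 1 / -(μ + 1 / 2)) * ε ^ (μ + 1) := by
  have hsub : uIcc 0 (1 - ε) ⊆ Ico 0 1 := by
    rw [uIcc_of_le (by linarith)]; exact Icc_subset_Ico_right (by linarith)
  have hsub' : uIcc 0 (1 - ε) ⊆ Icc 0 1 := hsub.trans Ico_subset_Icc_self
  rw [integral_mul_deriv_eq_deriv_mul (fun x hx => hf x (hsub hx)) (fun x hx => hv x (hsub' hx))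
    ((hf'.mono hsub).intervalIntegrable) ((hφ.mono hsub').intervalIntegrable)]
  calc _ ≤ |f (1 - ε) * v (1 - ε) - f 0 * v 0| + |∫ x in 0..1 - ε, f' x * v x| := abs_sub _ _
    _ ≤ 4 * B * K * ε ^ (μ + 1) + B * K * (1 / -μ + 1 / -(μ + 1 / 2)) * ε ^ (μ + 1) :=
        add_le_add (abs_boundary_term_le hμ hε₀ hε₁ hf_le hv_le)
          (abs_integral_deriv_mul_le hμ hε₀ hε₁ hf'_le hv_le)
    _ = _ := by ring

theorem abs_integral_zero_one_mul_le (hμ₀ : -1 < μ) (hμ : μ < -(1 / 2)) (hε₀ : 0 < ε)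
    (hε₁ : ε ≤ 1) (hf : ∀ x ∈ Ico 0 1, HasDerivAt f (f' x) x) (hf' : ContinuousOn f' (Ico 0 1))
    (hf_le : ∀ x ∈ Ico 0 1, |f x| ≤ B * (1 - x) ^ μ)
    (hf'_le : ∀ x ∈ Ico 0 1, |f' x| ≤ B * (1 - x) ^ (μ - 1))
    (hv : ∀ x ∈ Icc 0 1, HasDerivAt v (φ x) x) (hφ : ContinuousOn φ (Icc 0 1))
    (hφ_le : ∀ x ∈ Icc 0 1, |φ x| ≤ 1)
    (hv_le : ∀ x ∈ Icc 0 1, |v x| ≤ K * (ε + √ε * √(1 - x))) :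
    |∫ x in 0..1, f x * φ x| ≤
      B * (1 / (μ + 1) + K * (4 + 1 / -μ + 1 / -(μ + 1 / 2))) * ε ^ (μ + 1) := by
  have hf_cont : ContinuousOn f (Ico 0 1) := fun x hx =>
    (hf x hx).continuousAt.continuousWithinAt
  have hfφ : ContinuousOn (fun x => f x * φ x) (Ico 0 1) :=
    hf_cont.mul (hφ.mono Ico_subset_Icc_self)
  have hIoo : Ioo (1 - ε) 1 ⊆ Ico 0 1 :=
    Ioo_subset_Ico_self.trans (Ico_subset_Ico_left (by linarith))
  have h_tail_le : ∀ x ∈ Ioo (1 - ε) 1, |f x * φ x| ≤ B * (1 - x) ^ μ := fun x hx => by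
    rw [abs_mul]
    exact (mul_le_of_le_one_right (abs_nonneg _) (hφ_le x (Ico_subset_Icc_self (hIoo hx)))).trans
      (hf_le x (hIoo hx))
  have h_tail := abs_integral_le_of_abs_le_one_sub_rpow hμ₀ (by linarith) h_tail_le
  rw [sub_sub_cancel] at h_tail
  have h_bulk := abs_integral_zero_one_sub_mul_le hμ hε₀ hε₁ hf hf' hf_le hf'_le hv hφ hv_le
  rw [← integral_add_adjacent_intervals (b := 1 - ε)
    (hfφ.mono (by rw [uIcc_of_le (by linarith)]; exact Icc_subset_Ico_right (by linarith))
      |>.intervalIntegrable)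
    (intervalIntegrable_of_abs_le_one_sub_rpow hμ₀ (by linarith) (hfφ.mono hIoo) h_tail_le)]
  calc _ ≤ _ := abs_add_le _ _
    _ ≤ _ := add_le_add h_bulk h_tail
    _ = _ := by ring

end EndpointEstimate

-- For `m = 1` the second quotient has denominator `0`, so the lemmas below assume `2 ≤ m`.
noncomputable def chebyshevTAntideriv (m : ℕ) (x : ℝ) : ℝ :=
  (T ℝ (m + 1)).eval x / (2 * (m + 1)) - (T ℝ (m - 1)).eval x / (2 * (m - 1))

theorem hasDerivAt_chebyshevTAntideriv {m : ℕ} (hm : 2 ≤ m) (x : ℝ) :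
    HasDerivAt (chebyshevTAntideriv m) ((T ℝ m).eval x) x := by
  have hm₁ : (m : ℝ) - 1 ≠ 0 := by
    have : (2 : ℝ) ≤ m := by exact_mod_cast hm
    linarith
  refine (((Polynomial.hasDerivAt _ x).div_const _).sub
    ((Polynomial.hasDerivAt _ x).div_const _)).congr_deriv ?_
  have hU := congrArg (eval x) (two_mul_T_eq_U_sub_U ℝ ((m : ℤ) - 2))
  simp only [sub_add_cancel, eval_mul, eval_sub, eval_ofNat] at hU
  simp only [T_derivative_eq_U, eval_mul, eval_add, eval_sub, eval_natCast, eval_one,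
    Int.cast_add, Int.cast_sub, Int.cast_natCast, Int.cast_one, add_sub_cancel_right,
    show (m : ℤ) - 1 - 1 = m - 2 by ring]
  field_simp
  linear_combination -hU

theorem chebyshevTAntideriv_cos {m : ℕ} (hm : 2 ≤ m) (θ : ℝ) :
    chebyshevTAntideriv m (cos θ) =
      -(cos (m * θ) * cos θ + m * (sin (m * θ) * sin θ)) / ((m : ℝ) ^ 2 - 1) := by
  have hm' : (2 : ℝ) ≤ m := by exact_mod_cast hm
  have h₁ : (m : ℝ) - 1 ≠ 0 := by linarith
  have h₂ : (m : ℝ) ^ 2 - 1 ≠ 0 := by nlinarith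
  simp only [chebyshevTAntideriv, T_real_cos]
  push_cast
  rw [add_mul, sub_mul, one_mul, cos_add, cos_sub]
  field_simp
  ring

theorem abs_chebyshevTAntideriv_le {m : ℕ} (hm : 2 ≤ m) {x : ℝ} (hx : x ∈ Icc (-1) 1) :
    |chebyshevTAntideriv m x| ≤ 3 * (1 / (m : ℝ) ^ 2 + √(1 - x) / m) := by
  have hm' : (2 : ℝ) ≤ m := by exact_mod_cast hm
  have hsin : sin (arccos x) ≤ 3 / 2 * √(1 - x) := by
    rw [sin_arccos, show 1 - x ^ 2 = (1 - x) * (1 + x) by ring, sqrt_mul (by linarith [hx.2])]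
    have : √(1 + x) ≤ 3 / 2 := sqrt_le_iff.2 ⟨by norm_num, by linarith [hx.2]⟩
    nlinarith [sqrt_nonneg (1 - x)]
  have hnum : |cos (m * arccos x) * cos (arccos x) + m * (sin (m * arccos x) * sin (arccos x))|
      ≤ 1 + m * sin (arccos x) := by
    have hs₀ : 0 ≤ sin (arccos x) := sin_arccos x ▸ sqrt_nonneg _
    refine (abs_add_le _ _).trans (add_le_add ?_ ?_)
    · rw [abs_mul]
      exact mul_le_one₀ (abs_cos_le_one _) (abs_nonneg _) (abs_cos_le_one _)
    · rw [abs_mul, abs_mul, abs_of_nonneg hs₀, Nat.abs_cast]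
      gcongr
      exact mul_le_of_le_one_left hs₀ (abs_sin_le_one _)
  have hm₂ : (0 : ℝ) < (m : ℝ) ^ 2 - 1 := by nlinarith
  conv_lhs => rw [← cos_arccos hx.1 hx.2]
  rw [chebyshevTAntideriv_cos hm, abs_div, abs_neg, abs_of_pos hm₂, div_le_iff₀ hm₂]
  refine hnum.trans ?_
  have ht : 0 ≤ √(1 - x) := sqrt_nonneg _
  have hinv : 1 / (m : ℝ) ≤ 1 / 2 := one_div_le_one_div_of_le two_pos hm'
  have hinv₂ : 1 / (m : ℝ) ^ 2 ≤ 1 / 4 := one_div_le_one_div_of_le (by norm_num) (by nlinarith)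
  have hexpand : 3 * (1 / (m : ℝ) ^ 2 + √(1 - x) / m) * ((m : ℝ) ^ 2 - 1)
      = 3 * (1 - 1 / (m : ℝ) ^ 2) + 3 * √(1 - x) * (m - 1 / m) := by
    field_simp
  rw [hexpand]
  nlinarith [mul_le_mul_of_nonneg_left hsin (by positivity : (0 : ℝ) ≤ m),
    mul_le_mul_of_nonneg_left hinv ht]

theorem rpow_le_two_rpow_abs {t p : ℝ} (h₁ : 1 ≤ t) (h₂ : t ≤ 2) : t ^ p ≤ 2 ^ |p| :=
  (rpow_le_rpow_of_exponent_le h₁ (le_abs_self p)).trans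
    (rpow_le_rpow (by linarith) h₂ (abs_nonneg p))

noncomputable def jacobiWeight (α β x : ℝ) : ℝ := (1 - x) ^ α * (1 + x) ^ β

noncomputable def jacobiWeightDeriv (α β x : ℝ) : ℝ :=
  -α * (1 - x) ^ (α - 1) * (1 + x) ^ β + β * (1 - x) ^ α * (1 + x) ^ (β - 1)

section JacobiWeight

variable {α β μ x : ℝ}

theorem hasDerivAt_jacobiWeight (hx : x ∈ Ioo (-1) 1) :
    HasDerivAt (jacobiWeight α β) (jacobiWeightDeriv α β x) x := by
  have h₁ := ((hasDerivAt_id x).const_sub 1).rpow_const (p := α)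
    (Or.inl (sub_pos.2 hx.2).ne')
  have h₂ := ((hasDerivAt_id x).const_add 1).rpow_const (p := β)
    (Or.inl (neg_lt_iff_pos_add'.1 hx.1).ne')
  exact (h₁.mul h₂).congr_deriv (by simp only [id, jacobiWeightDeriv]; ring)

theorem continuousOn_jacobiWeightDeriv : ContinuousOn (jacobiWeightDeriv α β) (Ioo (-1) 1) := by
  intro x hx
  have h₁ : 1 - x ≠ 0 := (sub_pos.2 hx.2).ne'
  have h₂ : 1 + x ≠ 0 := (neg_lt_iff_pos_add'.1 hx.1).ne'
  apply ContinuousAt.continuousWithinAt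
  unfold jacobiWeightDeriv
  fun_prop (disch := simp [h₁, h₂])

theorem abs_jacobiWeight_le (hμα : μ ≤ α) (hx : x ∈ Ico 0 1) :
    |jacobiWeight α β x| ≤ (1 + |α| + |β|) * 2 ^ (|β| + 1) * (1 - x) ^ μ := by
  have ha : 0 < 1 - x := sub_pos.2 hx.2
  have hb : 1 ≤ 1 + x := le_add_of_nonneg_right hx.1
  have hβ : (1 + x) ^ β ≤ 2 ^ (|β| + 1) :=
    (rpow_le_two_rpow_abs hb (by linarith [hx.2])).trans
      (rpow_le_rpow_of_exponent_le one_le_two (by linarith))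
  rw [jacobiWeight, abs_of_nonneg (by positivity)]
  calc (1 - x) ^ α * (1 + x) ^ β ≤ (1 - x) ^ μ * 2 ^ (|β| + 1) :=
        mul_le_mul (rpow_le_rpow_of_exponent_ge ha (by linarith [hx.1]) hμα) hβ (by positivity)
          (by positivity)
    _ ≤ (1 + |α| + |β|) * 2 ^ (|β| + 1) * (1 - x) ^ μ := by
        rw [mul_comm, mul_assoc]
        exact le_mul_of_one_le_left (by positivity) (by linarith [abs_nonneg α, abs_nonneg β])

theorem abs_jacobiWeightDeriv_le (hμα : μ ≤ α) (hx : x ∈ Ico 0 1) :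
    |jacobiWeightDeriv α β x| ≤
      (1 + |α| + |β|) * 2 ^ (|β| + 1) * (1 - x) ^ (μ - 1) := by
  have ha : 0 < 1 - x := sub_pos.2 hx.2
  have ha₁ : 1 - x ≤ 1 := by linarith [hx.1]
  have hb : 1 ≤ 1 + x := le_add_of_nonneg_right hx.1
  have hb₂ : 1 + x ≤ 2 := by linarith [hx.2]
  have hc : (1 + x) ^ β ≤ 2 ^ (|β| + 1) :=
    (rpow_le_two_rpow_abs hb hb₂).trans (rpow_le_rpow_of_exponent_le one_le_two (by linarith))
  have hc' : (1 + x) ^ (β - 1) ≤ 2 ^ (|β| + 1) :=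
    (rpow_le_two_rpow_abs hb hb₂).trans (rpow_le_rpow_of_exponent_le one_le_two
      ((abs_sub _ _).trans (by simp)))
  have h₁ : (1 - x) ^ (α - 1) ≤ (1 - x) ^ (μ - 1) :=
    rpow_le_rpow_of_exponent_ge ha ha₁ (by linarith)
  have h₂ : (1 - x) ^ α ≤ (1 - x) ^ (μ - 1) :=
    rpow_le_rpow_of_exponent_ge ha ha₁ (by linarith)
  calc |jacobiWeightDeriv α β x|
      ≤ |α| * (1 - x) ^ (α - 1) * (1 + x) ^ β + |β| * (1 - x) ^ α * (1 + x) ^ (β - 1) := by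
        refine (abs_add_le _ _).trans_eq ?_
        simp only [abs_mul, abs_neg, abs_of_nonneg (rpow_nonneg ha.le _),
          abs_of_nonneg (rpow_nonneg (zero_le_one.trans hb) _)]
    _ ≤ |α| * (1 - x) ^ (μ - 1) * 2 ^ (|β| + 1) + |β| * (1 - x) ^ (μ - 1) * 2 ^ (|β| + 1) := by
        gcongr
    _ ≤ _ := by
        have := rpow_nonneg ha.le (μ - 1)
        have := rpow_nonneg zero_le_two (|β| + 1)
        nlinarith [mul_nonneg this (rpow_nonneg ha.le (μ - 1))]

end JacobiWeight

noncomputable def halfModMoment (α β : ℝ) (m : ℕ) : ℝ :=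
  ∫ x in (0 : ℝ)..1, jacobiWeight α β x * (T ℝ m).eval x

theorem intervalIntegrable_jacobiWeight_mul_eval_T {α : ℝ} (β : ℝ) (hα : -1 < α) (m : ℕ) :
    IntervalIntegrable (fun x => jacobiWeight α β x * (T ℝ m).eval x) volume 0 1 := by
  have hIoo : Ioo (0 : ℝ) 1 ⊆ Ioo (-1) 1 := Ioo_subset_Ioo_left (by norm_num)
  refine intervalIntegrable_of_abs_le_one_sub_rpow (B := (1 + |α| + |β|) * 2 ^ (|β| + 1)) hα
    zero_le_one ?_ fun x hx => ?_
  · exact ContinuousOn.mul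
      (fun x hx => (hasDerivAt_jacobiWeight (hIoo hx)).continuousAt.continuousWithinAt)
      (T ℝ m).continuous_aeval.continuousOn
  · rw [abs_mul]
    exact (mul_le_of_le_one_right (abs_nonneg _)
      (abs_eval_T_real_le_one _ (abs_le.2 ⟨by linarith [hx.1], hx.2.le⟩))).trans
      (abs_jacobiWeight_le le_rfl (Ioo_subset_Ico_self hx))

theorem modMoment_eq_halfModMoment_add {α β : ℝ} (hα : -1 < α) (hβ : -1 < β) (m : ℕ) :
    modMoment α β m = halfModMoment α β m + (-1) ^ m * halfModMoment β α m := by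
  set g := fun x : ℝ => jacobiWeight α β x * (T ℝ m).eval x with hg
  have hg_neg : (fun x => g (-x)) = fun x => (-1) ^ m * (jacobiWeight β α x * (T ℝ m).eval x) := by
    ext x
    simp only [hg, jacobiWeight, T_eval_neg, Int.cast_negOnePow_natCast, sub_neg_eq_add,
      ← sub_eq_add_neg]
    ring
  have h_left : ∫ x in (-1)..0, g x = (-1) ^ m * halfModMoment β α m := by
    rw [halfModMoment, ← intervalIntegral.integral_const_mul, ← hg_neg, integral_comp_neg,
      neg_zero]
  have h_left_int : IntervalIntegrable g volume (-1) 0 := by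
    rw [IntervalIntegrable.iff_comp_neg, hg_neg, neg_neg, neg_zero]
    exact ((intervalIntegrable_jacobiWeight_mul_eval_T α hβ m).const_mul _).symm
  change ∫ x in (-1)..1, g x = _
  rw [← integral_add_adjacent_intervals h_left_int
    (intervalIntegrable_jacobiWeight_mul_eval_T β hα m), h_left, add_comm]
  rfl

theorem abs_halfModMoment_le {α μ : ℝ} (β : ℝ) (hμ₀ : -1 < μ) (hμ : μ < -(1 / 2))
    (hμα : μ ≤ α) :
    ∃ C, ∀ m : ℕ, 2 ≤ m → |halfModMoment α β m| ≤ C * (m : ℝ) ^ (-2 - 2 * μ) := by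
  refine ⟨(1 + |α| + |β|) * 2 ^ (|β| + 1) * (1 / (μ + 1) + 3 * (4 + 1 / -μ + 1 / -(μ + 1 / 2))),
    fun m hm => ?_⟩
  have hm' : (2 : ℝ) ≤ m := by exact_mod_cast hm
  set ε := 1 / (m : ℝ) ^ 2 with hε
  have hε₀ : 0 < ε := by positivity
  have hε₁ : ε ≤ 1 := by rw [hε, div_le_one (by positivity)]; nlinarith
  have hsqrt : √ε = 1 / m := by
    rw [hε, sqrt_div' _ (by positivity), sqrt_one, sqrt_sq (by positivity)]
  have hpow : ε ^ (μ + 1) = (m : ℝ) ^ (-2 - 2 * μ) := by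
    rw [hε, one_div, inv_rpow (by positivity), ← rpow_natCast, ← rpow_mul (by positivity),
      ← rpow_neg (by positivity)]
    ring_nf
  have hIco : Ico (0 : ℝ) 1 ⊆ Ioo (-1) 1 := Ico_subset_Ioo_left (by norm_num)
  rw [← hpow]
  exact abs_integral_zero_one_mul_le (φ := fun x => (T ℝ m).eval x) hμ₀ hμ hε₀ hε₁
    (fun x hx => hasDerivAt_jacobiWeight (hIco hx)) (continuousOn_jacobiWeightDeriv.mono hIco)
    (fun x hx => abs_jacobiWeight_le hμα hx) (fun x hx => abs_jacobiWeightDeriv_le hμα hx)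
    (fun x _ => hasDerivAt_chebyshevTAntideriv hm x) (T ℝ m).continuous_aeval.continuousOn
    (fun x hx => abs_eval_T_real_le_one _ (abs_le.2 ⟨by linarith [hx.1], hx.2⟩))
    (fun x hx => by
      rw [hsqrt, one_div_mul_eq_div]
      exact abs_chebyshevTAntideriv_le hm ⟨by linarith [hx.1], hx.2⟩)

theorem modMoment_asymptotic (α β : ℝ) (hα : -1 < α) (hβ : -1 < β)
    (hmin : min α β < -(1/2)) :
    ∃ C : ℝ, ∀ m : ℕ, 1 ≤ m →
      |modMoment α β m| ≤ C * (m : ℝ) ^ (-2 - 2 * min α β) := by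
  have hμ₀ : -1 < min α β := lt_min hα hβ
  obtain ⟨C₁, hC₁⟩ := abs_halfModMoment_le β hμ₀ hmin (min_le_left α β)
  obtain ⟨C₂, hC₂⟩ := abs_halfModMoment_le α hμ₀ hmin (min_le_right α β)
  refine ⟨max (C₁ + C₂) |modMoment α β 1|, fun m hm => ?_⟩
  obtain rfl | hm₂ := hm.eq_or_lt
  · simp
  calc |modMoment α β m| ≤ |halfModMoment α β m| + |halfModMoment β α m| := by
        rw [modMoment_eq_halfModMoment_add hα hβ]
        refine (abs_add_le _ _).trans_eq ?_
        rw [abs_mul, abs_pow, abs_neg, abs_one, one_pow, one_mul]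
    _ ≤ (C₁ + C₂) * (m : ℝ) ^ (-2 - 2 * min α β) := by
        linarith [hC₁ m hm₂, hC₂ m hm₂]
    _ ≤ _ := mul_le_mul_of_nonneg_right (le_max_left _ _) (by positivity)
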